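/- Let I be an unmixed (full-supported) matroidal ideal of degree d = 2 in R = k[x_1,...,x_n], and let m be the number of blocks in the partition S_1,...,S_m of the variable set associated to I (where, for a minimal irredundant intersection I = ∩_{i=1}^m (I : x_i), one sets S_i = [n] \ G(I : x_i)). Then the number of associated primes of R/I equals m, i.e., |Ass(R/I)| = m. -/

import Mathlib

open MvPolynomial

namespace PaperDefs

variable {k : Type*} [Field k] {n : ℕ}

/-- The total degree of an exponent vector. -/
def edeg (a : Fin n →₀ ℕ) : ℕ := ∑ i, a i

/-- `I` is a monomial ideal: it is generated by a set of monomials. -/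
def IsMonomialIdeal (I : Ideal (MvPolynomial (Fin n) k)) : Prop :=
  ∃ S : Set (Fin n →₀ ℕ),
    I = Ideal.span ((fun a => (MvPolynomial.monomial a (1 : k))) '' S)

/-- The (exponent vectors of the) unique minimal monomial generating set `G(I)`:
monomials of `I` that are minimal with respect to divisibility. -/
def minGens (I : Ideal (MvPolynomial (Fin n) k)) : Set (Fin n →₀ ℕ) :=
  {a | (MvPolynomial.monomial a (1 : k)) ∈ I ∧
    ∀ b : Fin n →₀ ℕ, b < a → (MvPolynomial.monomial b (1 : k)) ∉ I}

/-- A squarefree exponent vector. -/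
def SqFree (a : Fin n →₀ ℕ) : Prop := ∀ i, a i ≤ 1

/-- `I` is a polymatroidal ideal of degree `d`. -/
def IsPolymatroidal (I : Ideal (MvPolynomial (Fin n) k)) (d : ℕ) : Prop :=
  IsMonomialIdeal I ∧ I ≠ ⊥ ∧
  (∀ a ∈ minGens I, edeg a = d) ∧
  ∀ a ∈ minGens I, ∀ b ∈ minGens I, ∀ i : Fin n, b i < a i →
    ∃ j : Fin n, a j < b j ∧
      (MvPolynomial.monomial (a - Finsupp.single i 1 + Finsupp.single j 1) (1 : k)) ∈ I

/-- `I` is a matroidal ideal of degree `d`: a squarefree polymatroidal ideal. -/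
def IsMatroidal (I : Ideal (MvPolynomial (Fin n) k)) (d : ℕ) : Prop :=
  IsPolymatroidal I d ∧ ∀ a ∈ minGens I, SqFree a

/-- `I` is full-supported: every variable divides some minimal generator. -/
def FullSupported (I : Ideal (MvPolynomial (Fin n) k)) : Prop :=
  ∀ i : Fin n, ∃ a ∈ minGens I, a i ≠ 0

/-- The maximal graded ideal `(x_1, ..., x_n)`. -/
noncomputable def varIdeal (k : Type*) [Field k] (n : ℕ) : Ideal (MvPolynomial (Fin n) k) :=
  Ideal.span (Set.range MvPolynomial.X)

/-- The colon ideal `(I : x_i)`. -/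
noncomputable def colonVar (I : Ideal (MvPolynomial (Fin n) k)) (i : Fin n) :
    Ideal (MvPolynomial (Fin n) k) :=
  I.colon ((Ideal.span {MvPolynomial.X i} : Ideal (MvPolynomial (Fin n) k)) : Set (MvPolynomial (Fin n) k))

/-- The height of an ideal: the infimum of `Order.height` over the primes containing it. -/
noncomputable def ht {R : Type*} [CommRing R] (I : Ideal R) : ℕ∞ :=
  ⨅ (p : PrimeSpectrum R) (_ : I ≤ p.asIdeal), Order.height p

/-- `I` is unmixed: all associated primes of `R/I` have the same height. -/
def IsUnmixed (I : Ideal (MvPolynomial (Fin n) k)) : Prop :=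
  ∀ p ∈ associatedPrimes (MvPolynomial (Fin n) k) (MvPolynomial (Fin n) k ⧸ I),
    ∀ q ∈ associatedPrimes (MvPolynomial (Fin n) k) (MvPolynomial (Fin n) k ⧸ I),
      ht p = ht q

/-- The arithmetical rank of `I`. -/
noncomputable def ara (I : Ideal (MvPolynomial (Fin n) k)) : ℕ :=
  sInf {t : ℕ | ∃ f : Fin t → MvPolynomial (Fin n) k,
    (Ideal.span (Set.range f)).radical = I.radical}

/-- The squarefree Veronese ideal of degree `d`. -/
noncomputable def sqfreeVeronese (k : Type*) [Field k] (n d : ℕ) : Ideal (MvPolynomial (Fin n) k) :=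
  Ideal.span ((fun s : Finset (Fin n) => ∏ i ∈ s, MvPolynomial.X i) ''
    {s : Finset (Fin n) | s.card = d})

/-- The depth of `R/I` : the supremum of lengths of `R/I`-regular sequences consisting of
elements of the maximal graded ideal. -/
noncomputable def quotDepth (I : Ideal (MvPolynomial (Fin n) k)) : ℕ :=
  sSup {r : ℕ | ∃ rs : List (MvPolynomial (Fin n) k), rs.length = r ∧
    (∀ x ∈ rs, x ∈ varIdeal k n) ∧
    RingTheory.Sequence.IsRegular (MvPolynomial (Fin n) k ⧸ I) rs}

/-- `R/I` is Cohen–Macaulay: the depth of `R/I` equals its Krull dimension. -/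
def IsCohenMacaulayQuot (I : Ideal (MvPolynomial (Fin n) k)) : Prop :=
  (quotDepth I : WithBot ℕ∞) = ringKrullDim (MvPolynomial (Fin n) k ⧸ I)

end PaperDefs

/-!
Write `i ~ j` when `xᵢxⱼ ∉ I`. For a full-supported matroidal ideal of degree 2 the exchange
property makes `~` transitive, and squarefreeness makes it reflexive, so `I` is the edge ideal of
a complete multipartite graph and `(I : xᵢ)` is the prime generated by the variables outside the
class of `i`. These primes are pairwise incomparable. An associated prime of `R/I` lies above one
factor of `I = ⋂ (I : x_{v i})` and below another, hence equals a factor; conversely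
`(I : xᵢ)` is the annihilator of `xᵢ` in `R/I`, and irredundancy makes the `m` factors distinct.
-/

open PaperDefs

theorem Function.injective_of_biInf_compl_ne {α ι : Type*} [CompleteLattice α] {f : ι → α}
    {a : α} (ha : a = ⨅ i, f i) (hirr : ∀ i₀, ⨅ i ∈ ({i₀}ᶜ : Set ι), f i ≠ a) :
    Function.Injective f := by
  intro i₀ i₁ heq
  by_contra hne
  refine hirr i₀ (le_antisymm ?_ (ha ▸ le_iInf₂ fun i _ => iInf_le f i))
  refine ha ▸ le_iInf fun i => ?_
  rcases eq_or_ne i i₀ with rfl | hi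
  · exact (iInf₂_le i₁ (Set.mem_compl_singleton_iff.mpr (Ne.symm hne))).trans heq.symm.le
  · exact iInf₂_le i hi

section AssociatedPrimes

variable {R : Type*} [CommRing R]

theorem Ideal.colon_bot_singleton_mk (I : Ideal R) (x : R) :
    (⊥ : Submodule R (R ⧸ I)).colon {Ideal.Quotient.mk I x} =
      I.colon (Ideal.span {x} : Set R) := by
  ext r
  rw [Submodule.mem_colon_singleton, Submodule.mem_colon_span_singleton, Submodule.mem_bot,
    Algebra.smul_def, Ideal.Quotient.algebraMap_eq, ← map_mul, Ideal.Quotient.eq_zero_iff_mem,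
    smul_eq_mul]

theorem isAssociatedPrime_quotient_colon {I : Ideal R} {x : R}
    (hx : (I.colon (Ideal.span {x} : Set R)).IsPrime) :
    IsAssociatedPrime (I.colon (Ideal.span {x} : Set R)) (R ⧸ I) :=
  ⟨hx, Ideal.Quotient.mk I x, by rw [Ideal.colon_bot_singleton_mk, hx.radical]⟩

theorem IsAssociatedPrime.exists_le_and_le_of_eq_iInf {ι : Type*} [Finite ι] {I p : Ideal R}
    {P : ι → Ideal R} (hP : ∀ i, (P i).IsPrime) (hI : I = ⨅ i, P i)
    (hp : IsAssociatedPrime p (R ⧸ I)) : ∃ i j, P i ≤ p ∧ p ≤ P j := by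
  obtain ⟨hprime, y, rfl⟩ := hp
  obtain ⟨x, rfl⟩ := Ideal.Quotient.mk_surjective y
  rw [Ideal.colon_bot_singleton_mk] at hprime ⊢
  have hIp : I ≤ (I.colon (Ideal.span {x} : Set R)).radical := fun r hr =>
    Ideal.le_radical (Submodule.mem_colon_span_singleton.mpr (I.mul_mem_right x hr))
  obtain ⟨i, hi⟩ : ∃ i, P i ≤ (I.colon (Ideal.span {x} : Set R)).radical := by
    have := Fintype.ofFinite ι
    obtain ⟨i, -, hi⟩ := (hprime.inf_le' (s := Finset.univ) (f := P)).mp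
      (by rwa [Finset.inf_univ_eq_iInf, ← hI])
    exact ⟨i, hi⟩
  obtain ⟨j, hj⟩ : ∃ j, x ∉ P j := by
    by_contra! hx
    refine hprime.ne_top (Ideal.eq_top_iff_one _ |>.mpr (Ideal.le_radical ?_))
    rw [Submodule.mem_colon_span_singleton, one_smul, hI]
    exact Submodule.mem_iInf _ |>.mpr hx
  refine ⟨i, j, hi, (hP j).radical_le_iff.mpr fun r hr => ?_⟩
  have hrx : r * x ∈ P j := (hI ▸ iInf_le P j) (Submodule.mem_colon_span_singleton.mp hr)
  exact ((hP j).mem_or_mem hrx).resolve_right hj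

end AssociatedPrimes

namespace MvPolynomial

variable {σ R : Type*}

theorem isPrime_span_X_image [CommRing R] [IsDomain R] (s : Set σ) :
    (Ideal.span (X '' s) : Ideal (MvPolynomial σ R)).IsPrime := by
  classical
  -- the span is the kernel of the substitution `xⱼ ↦ 0` for `j ∈ s`
  set φ : MvPolynomial σ R →ₐ[R] MvPolynomial σ R := aeval (sᶜ.indicator X)
  have hφX (j : σ) : φ (X j) = sᶜ.indicator X j := aeval_X _ j
  have hsub (f : MvPolynomial σ R) : f - φ f ∈ Ideal.span (X '' s) := by
    induction f using MvPolynomial.induction_on with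
    | C a => simp
    | add p q hp hq => simpa [add_sub_add_comm] using Ideal.add_mem _ hp hq
    | mul_X p j hp =>
      rw [map_mul,
        show p * X j - φ p * φ (X j) = (p - φ p) * X j + φ p * (X j - φ (X j)) by ring]
      refine Ideal.add_mem _ (Ideal.mul_mem_right _ _ hp) (Ideal.mul_mem_left _ _ ?_)
      by_cases hj : j ∈ s
      · simpa [hφX, hj] using Ideal.subset_span (Set.mem_image_of_mem X hj)
      · simp [hφX, hj]
  have hker : Ideal.span (X '' s) = RingHom.ker φ := by
    refine le_antisymm (Ideal.span_le.mpr ?_) fun f hf => ?_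
    · rintro _ ⟨j, hj, rfl⟩
      simp [hφX, hj]
    · simpa [(RingHom.mem_ker).mp hf] using hsub f
  rw [hker]
  exact RingHom.ker_isPrime _

section CommSemiring

variable [CommSemiring R]

theorem X_mem_span_X_image_iff [Nontrivial R] {s : Set σ} {j : σ} :
    (X j : MvPolynomial σ R) ∈ Ideal.span (X '' s) ↔ j ∈ s := by
  classical
  rw [mem_ideal_span_X_image]
  refine ⟨fun h => ?_, fun h m hm => ⟨j, h, by simp_all [support_X]⟩⟩
  obtain ⟨i, hi, hji⟩ := h (Finsupp.single j 1) (by simp [support_X])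
  rw [Finsupp.single_apply_ne_zero] at hji
  exact hji.1 ▸ hi

theorem X_mul_X_eq_monomial (i j : σ) :
    (X i * X j : MvPolynomial σ R) = monomial (Finsupp.single i 1 + Finsupp.single j 1) 1 := by
  rw [X, X, monomial_mul, one_mul]

theorem monomial_mem_of_le {I : Ideal (MvPolynomial σ R)} {a b : σ →₀ ℕ} {r : R}
    (hab : a ≤ b) (ha : monomial a r ∈ I) : monomial b r ∈ I := by
  rw [← tsub_add_cancel_of_le hab, ← one_mul r, ← monomial_mul]
  exact I.mul_mem_left _ ha

end CommSemiring

end MvPolynomial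

theorem Finsupp.degree_lt_degree {σ : Type*} {a b : σ →₀ ℕ} (h : b < a) :
    b.degree < a.degree := by
  obtain ⟨c, rfl⟩ := le_iff_exists_add.mp h.le
  have hc : c ≠ 0 := by rintro rfl; simp at h
  rw [map_add, lt_add_iff_pos_right, pos_iff_ne_zero, Ne, Finsupp.degree_eq_zero_iff]
  exact hc

namespace PaperDefs

variable {k : Type*} [Field k] {n : ℕ} {I : Ideal (MvPolynomial (Fin n) k)}

theorem edeg_eq_degree (a : Fin n →₀ ℕ) : edeg a = a.degree :=
  (Finsupp.degree_eq_sum a).symm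

theorem exists_mem_minGens_le {a : Fin n →₀ ℕ} (ha : monomial a (1 : k) ∈ I) :
    ∃ g ∈ minGens I, g ≤ a := by
  obtain ⟨g, ⟨hgI, hga⟩, hmin⟩ := wellFounded_lt.has_min
    {b : Fin n →₀ ℕ | monomial b (1 : k) ∈ I ∧ b ≤ a} ⟨a, ha, le_rfl⟩
  exact ⟨g, ⟨hgI, fun b hb hbI => hmin b ⟨hbI, hb.le.trans hga⟩ hb⟩, hga⟩

theorem IsMonomialIdeal.monomial_mem_of_mem_support (hI : IsMonomialIdeal I)
    {f : MvPolynomial (Fin n) k} (hf : f ∈ I) {a : Fin n →₀ ℕ} (ha : a ∈ f.support) :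
    monomial a (1 : k) ∈ I := by
  obtain ⟨S, rfl⟩ := hI
  obtain ⟨s, hs, hsa⟩ := mem_ideal_span_monomial_image.mp hf a ha
  exact monomial_mem_of_le hsa (Ideal.subset_span ⟨s, hs, rfl⟩)

theorem IsPolymatroidal.mem_minGens_of_edeg_eq {d : ℕ} (hI : IsPolymatroidal I d)
    {a : Fin n →₀ ℕ} (haI : monomial a (1 : k) ∈ I) (ha : edeg a = d) :
    a ∈ minGens I := by
  refine ⟨haI, fun b hb hbI => ?_⟩
  obtain ⟨g, hg, hgb⟩ := exists_mem_minGens_le hbI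
  have hgd : d ≤ b.degree := by
    rw [← hI.2.2.1 g hg, edeg_eq_degree]
    exact Finsupp.degree_mono hgb
  have hbd : b.degree < d := by
    rw [← ha, edeg_eq_degree]
    exact Finsupp.degree_lt_degree hb
  exact hgd.not_gt hbd

theorem SqFree.eq_single_add_single {a : Fin n →₀ ℕ} (hsq : SqFree a) (ha : edeg a = 2) :
    ∃ p q, p ≠ q ∧ a = Finsupp.single p 1 + Finsupp.single q 1 := by
  have hcard : a.support.card = 2 := by
    rw [← ha, edeg_eq_degree, Finsupp.degree_apply, Finset.card_eq_sum_ones]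
    exact Finset.sum_congr rfl fun i hi => (le_antisymm (hsq i) (Nat.one_le_iff_ne_zero.mpr
      (Finsupp.mem_support_iff.mp hi))).symm
  obtain ⟨p, q, hpq, hs⟩ := Finset.card_eq_two.mp hcard
  refine ⟨p, q, hpq, Finsupp.ext fun i => ?_⟩
  have hi : a i ≠ 0 ↔ i = p ∨ i = q := by
    rw [← Finsupp.mem_support_iff, hs, Finset.mem_insert, Finset.mem_singleton]
  have := hsq i
  simp only [Finsupp.add_apply, Finsupp.single_apply]
  split_ifs <;> omega

end PaperDefs

namespace PaperDefs.IsMatroidal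

open Finsupp

variable {k : Type*} [Field k] {n : ℕ} {I : Ideal (MvPolynomial (Fin n) k)}

theorem exists_eq_single_add_single (hI : IsMatroidal I 2) {g : Fin n →₀ ℕ}
    (hg : g ∈ minGens I) : ∃ p q, p ≠ q ∧ g = single p 1 + single q 1 :=
  (hI.2 g hg).eq_single_add_single (hI.1.2.2.1 g hg)

theorem X_mul_X_self_notMem (hI : IsMatroidal I 2) (i : Fin n) : X i * X i ∉ I := by
  intro h
  rw [X_mul_X_eq_monomial] at h
  obtain ⟨g, hg, hgi⟩ := exists_mem_minGens_le h
  obtain ⟨p, q, hpq, rfl⟩ := hI.exists_eq_single_add_single hg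
  have hp := hgi p
  have hq := hgi q
  simp only [Finsupp.add_apply, single_apply] at hp hq
  split_ifs at hp hq <;> grind

theorem exists_X_mul_X_mem (hI : IsMatroidal I 2) (hfull : FullSupported I) (j : Fin n) :
    ∃ t, X j * X t ∈ I := by
  obtain ⟨g, hg, hgj⟩ := hfull j
  obtain ⟨p, q, -, rfl⟩ := hI.exists_eq_single_add_single hg
  have hpq : X p * X q ∈ I := X_mul_X_eq_monomial (R := k) p q ▸ hg.1
  have hj : j = p ∨ j = q := by
    by_contra! hj
    simp [Ne.symm hj.1, Ne.symm hj.2] at hgj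
  rcases hj with rfl | rfl
  · exact ⟨q, hpq⟩
  · exact ⟨p, by rwa [mul_comm]⟩

theorem X_mul_X_mem_or_mem (hI : IsMatroidal I 2) (hfull : FullSupported I) {a c : Fin n}
    (hac : X a * X c ∈ I) (b : Fin n) : X a * X b ∈ I ∨ X b * X c ∈ I := by
  obtain ⟨t, hbt⟩ := hI.exists_X_mul_X_mem hfull b
  rcases eq_or_ne t a with rfl | hta
  · exact .inl (by rwa [mul_comm])
  rcases eq_or_ne t c with rfl | htc
  · exact .inr hbt
  have htb : t ≠ b := by
    rintro rfl
    exact hI.X_mul_X_self_notMem t hbt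
  have hedeg (p q : Fin n) : edeg (single p 1 + single q 1) = 2 := by
    simp [edeg_eq_degree]
  rw [X_mul_X_eq_monomial] at hac hbt
  have hu := hI.1.mem_minGens_of_edeg_eq hbt (hedeg b t)
  have hv := hI.1.mem_minGens_of_edeg_eq hac (hedeg a c)
  obtain ⟨j, hj, hmem⟩ := hI.1.2.2.2 _ hu _ hv t (by simp [hta, htc, htb])
  rw [add_tsub_cancel_right, ← X_mul_X_eq_monomial] at hmem
  have hjac : j = a ∨ j = c := by
    by_contra! hjac
    simp [single_apply, Ne.symm hjac.1, Ne.symm hjac.2] at hj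
  rcases hjac with rfl | rfl
  · exact .inl (by rwa [mul_comm])
  · exact .inr hmem

theorem exists_X_mul_X_mem_of_monomial_mem (hI : IsMatroidal I 2) (hfull : FullSupported I)
    {i : Fin n} {a : Fin n →₀ ℕ} (h : monomial (a + single i 1) (1 : k) ∈ I) :
    ∃ j, X i * X j ∈ I ∧ a j ≠ 0 := by
  obtain ⟨g, hg, hga⟩ := exists_mem_minGens_le h
  obtain ⟨p, q, -, rfl⟩ := hI.exists_eq_single_add_single hg
  have hpq : X p * X q ∈ I := X_mul_X_eq_monomial (R := k) p q ▸ hg.1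
  have hdiv (j : Fin n) (hj : (single p 1 + single q 1 : Fin n →₀ ℕ) j ≠ 0)
      (hij : X i * X j ∈ I) : ∃ j, X i * X j ∈ I ∧ a j ≠ 0 := by
    have hji : i ≠ j := by
      rintro rfl
      exact hI.X_mul_X_self_notMem i hij
    have := hga j
    simp only [Finsupp.add_apply, single_eq_of_ne' hji] at this hj
    exact ⟨j, hij, by omega⟩
  rcases hI.X_mul_X_mem_or_mem hfull hpq i with h | h
  · exact hdiv p (by simp) (by rwa [mul_comm])
  · exact hdiv q (by simp) h

theorem colonVar_eq_span (hI : IsMatroidal I 2) (hfull : FullSupported I) (i : Fin n) :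
    colonVar I i = Ideal.span (X '' {j | X i * X j ∈ I}) := by
  refine le_antisymm (fun f hf => ?_) (Ideal.span_le.mpr ?_)
  · rw [colonVar, Submodule.mem_colon_span_singleton, smul_eq_mul] at hf
    refine mem_ideal_span_X_image.mpr fun a ha => ?_
    have hsupp : a + single i 1 ∈ (f * X i).support := by
      rwa [MvPolynomial.mem_support_iff, coeff_mul_X, ← MvPolynomial.mem_support_iff]
    obtain ⟨j, hij, hj⟩ :=
      hI.exists_X_mul_X_mem_of_monomial_mem hfull (hI.1.1.monomial_mem_of_mem_support hf hsupp)
    exact ⟨j, hij, hj⟩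
  · rintro _ ⟨j, hj, rfl⟩
    rw [SetLike.mem_coe, colonVar, Submodule.mem_colon_span_singleton, smul_eq_mul, mul_comm]
    exact hj

theorem colonVar_isPrime (hI : IsMatroidal I 2) (hfull : FullSupported I) (i : Fin n) :
    (colonVar I i).IsPrime :=
  hI.colonVar_eq_span hfull i ▸ isPrime_span_X_image _

theorem colonVar_mem_associatedPrimes (hI : IsMatroidal I 2) (hfull : FullSupported I)
    (i : Fin n) :
    colonVar I i ∈ associatedPrimes (MvPolynomial (Fin n) k) (MvPolynomial (Fin n) k ⧸ I) :=
  isAssociatedPrime_quotient_colon (hI.colonVar_isPrime hfull i)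

theorem colonVar_eq_of_le (hI : IsMatroidal I 2) (hfull : FullSupported I) {u w : Fin n}
    (h : colonVar I u ≤ colonVar I w) : colonVar I u = colonVar I w := by
  rw [hI.colonVar_eq_span hfull u, hI.colonVar_eq_span hfull w] at h ⊢
  have huw (j : Fin n) (hj : X u * X j ∈ I) : X w * X j ∈ I :=
    (X_mem_span_X_image_iff (s := {j | X w * X j ∈ I})).mp
      (h (Ideal.subset_span ⟨j, hj, rfl⟩))
  have hu_w : X u * X w ∉ I := fun h' => hI.X_mul_X_self_notMem w (huw w h')
  refine congrArg (fun s => Ideal.span (X '' s)) (Set.ext fun j => ⟨huw j, fun hj => ?_⟩)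
  rw [Set.mem_ofPred_eq, mul_comm] at hj ⊢
  exact (hI.X_mul_X_mem_or_mem hfull hj u).resolve_right hu_w

end PaperDefs.IsMatroidal

open PaperDefs in
theorem statement5_general {k : Type*} [Field k] {n : ℕ}
    (I : Ideal (MvPolynomial (Fin n) k))
    (hI : IsMatroidal I 2) (hfull : FullSupported I)
    (m : ℕ) (v : Fin m → Fin n)
    (hrep : I = ⨅ i : Fin m, colonVar I (v i))
    (hirr : ∀ i₀ : Fin m, (⨅ i ∈ ({i₀}ᶜ : Set (Fin m)), colonVar I (v i)) ≠ I) :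
    (associatedPrimes (MvPolynomial (Fin n) k) (MvPolynomial (Fin n) k ⧸ I)).ncard = m := by
  have hAss : associatedPrimes (MvPolynomial (Fin n) k) (MvPolynomial (Fin n) k ⧸ I) =
      Set.range fun i => colonVar I (v i) := by
    refine Set.Subset.antisymm (fun p hp => ?_)
      (Set.range_subset_iff.mpr fun i => hI.colonVar_mem_associatedPrimes hfull (v i))
    obtain ⟨i, j, hip, hpj⟩ :=
      hp.exists_le_and_le_of_eq_iInf (fun i => hI.colonVar_isPrime hfull (v i)) hrep
    exact ⟨j, le_antisymm ((hI.colonVar_eq_of_le hfull (hip.trans hpj)).symm.trans_le hip) hpj⟩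
  rw [hAss, Set.ncard_range_of_injective (Function.injective_of_biInf_compl_ne hrep hirr),
    Nat.card_eq_fintype_card, Fintype.card_fin]

open PaperDefs in
/-- Corollary 1.4, first part. Let `I` be an unmixed full-supported
matroidal ideal of degree `2` and let `m` be the number of blocks of the associated
partition, i.e. the number of factors in a minimal irredundant intersection
`I = ⋂_{i=1}^m (I : x_{v i})`. Then `|Ass(R/I)| = m`. -/
theorem statement5 {k : Type*} [Field k] {n : ℕ}
    (I : Ideal (MvPolynomial (Fin n) k))
    (hI : IsMatroidal I 2) (hfull : FullSupported I) (hunmixed : IsUnmixed I)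
    (m : ℕ) (v : Fin m → Fin n)
    (hrep : I = ⨅ i : Fin m, colonVar I (v i))
    (hirr : ∀ i₀ : Fin m, (⨅ i ∈ ({i₀}ᶜ : Set (Fin m)), colonVar I (v i)) ≠ I) :
    (associatedPrimes (MvPolynomial (Fin n) k) (MvPolynomial (Fin n) k ⧸ I)).ncard = m :=
  statement5_general I hI hfull m v hrep hirr
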